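/- arXiv:1407.5138 — 2 statements merged into one kernel-verified Lean document; each statement's English description precedes it below -/
import Mathlib

section
/- In the minimal counterexample (G, C_0), no 3-face and 4-face of G share a common edge. -/
/-!
Common definitions for formalizing "A relaxation of the Bordeaux Conjecture"
(Liu, Li, Yu).  We model a plane graph combinatorially: a simple graph together
with a set of faces (each given by its boundary cycle, a list of vertices in
cyclic order), a distinguished outer face, and, for each cycle, the sets of
vertices drawn strictly inside and strictly outside of it.

A (2,0,0)-coloring uses colors `0, 1, 2 : Fin 3`, where color `0` is the color
of deficiency 2 (called "color 1" in the paper) and colors `1` and `2` must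
induce independent sets.
-/

variable {V : Type} [Fintype V] [DecidableEq V]

/-- `l` is the list of vertices of a cycle of `G`, in cyclic order. -/
def IsCycleList (G : SimpleGraph V) (l : List V) : Prop :=
  3 ≤ l.length ∧ l.Nodup ∧ ∀ p ∈ l.zip (l.rotate 1), G.Adj p.1 p.2

/-- Two lists represent the same cyclic sequence, up to rotation and reflection. -/
def SameCycle (l l' : List V) : Prop :=
  ∃ n : ℕ, l'.rotate n = l ∨ l'.reverse.rotate n = l

/-- `u` and `v` are consecutive vertices (i.e. joined by an edge) of the cycle `l`. -/
def CycAdj (l : List V) (u v : V) : Prop :=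
  (u, v) ∈ l.zip (l.rotate 1) ∨ (v, u) ∈ l.zip (l.rotate 1)

/-- A combinatorial model of a plane graph. -/
structure PlaneGraph (V : Type) [Fintype V] [DecidableEq V] where
  /-- the underlying abstract simple graph -/
  G : SimpleGraph V
  /-- the faces, given by their boundary cycles -/
  faces : Set (List V)
  /-- the boundary cycle of the outer (unbounded) face -/
  outer : List V
  outer_mem : outer ∈ faces
  faces_cycle : ∀ l ∈ faces, IsCycleList G l
  /-- the set of vertices strictly inside a cycle -/
  inside : List V → Set V
  /-- the set of vertices strictly outside a cycle -/
  outside : List V → Set V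
  inside_outside_cover : ∀ l, IsCycleList G l → ∀ v : V,
    v ∈ inside l ∨ v ∈ outside l ∨ v ∈ l
  inside_outside_disjoint : ∀ l, Disjoint (inside l) (outside l)
  on_cycle_not_inside_outside : ∀ l, ∀ v ∈ l, v ∉ inside l ∧ v ∉ outside l
  no_edge_inside_outside : ∀ l, IsCycleList G l →
    ∀ u ∈ inside l, ∀ v ∈ outside l, ¬ G.Adj u v
  inner_face_inside_empty : ∀ l ∈ faces, ¬ SameCycle l outer → inside l = ∅
  outer_outside_empty : outside outer = ∅

namespace PlaneGraph

/-- `l` is the boundary cycle of a face of `P` (up to rotation/reflection). -/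
def IsFace (P : PlaneGraph V) (l : List V) : Prop :=
  ∃ l' ∈ P.faces, SameCycle l l'

/-- The degree of a vertex. -/
noncomputable def deg (P : PlaneGraph V) (v : V) : ℕ :=
  {u | P.G.Adj v u}.ncard

/-- A separating cycle: there are vertices strictly inside and strictly outside. -/
def Separating (P : PlaneGraph V) (l : List V) : Prop :=
  IsCycleList P.G l ∧ (P.inside l).Nonempty ∧ (P.outside l).Nonempty

end PlaneGraph

/-- `a`, `b`, `c` span a triangle of `G`. -/
def IsTriangle (G : SimpleGraph V) (a b c : V) : Prop :=
  G.Adj a b ∧ G.Adj b c ∧ G.Adj c a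

/-- `v` is incident to (i.e. lies on) some triangle of `G`. -/
def OnTriangle (G : SimpleGraph V) (v : V) : Prop :=
  ∃ a b : V, IsTriangle G v a b

/-- `G` contains no cycle of length 5. -/
def NoFiveCycle (G : SimpleGraph V) : Prop :=
  ∀ l : List V, IsCycleList G l → l.length ≠ 5

/-- No two distinct triangles of `G` share a vertex. -/
def NoIntersectingTriangles (G : SimpleGraph V) : Prop :=
  ∀ a b c d e f : V, IsTriangle G a b c → IsTriangle G d e f →
    (({a, b, c} : Set V) ∩ ({d, e, f} : Set V)).Nonempty →
    ({a, b, c} : Set V) = ({d, e, f} : Set V)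

/-- Membership in the family `𝒢` of plane graphs with no 5-cycles and no
two triangles sharing a vertex. -/
def PlaneGraph.InFamilyG (P : PlaneGraph V) : Prop :=
  NoFiveCycle P.G ∧ NoIntersectingTriangles P.G

/-- A (2,0,0)-coloring of `G`: color `0` induces a subgraph of maximum degree
at most `2`, and colors `1` and `2` induce independent sets. -/
def IsCol200 (G : SimpleGraph V) (c : V → Fin 3) : Prop :=
  (∀ u v : V, G.Adj u v → c u ≠ 0 → c u ≠ c v) ∧
  (∀ v : V, c v = 0 → {u | G.Adj v u ∧ c u = 0}.ncard ≤ 2)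

/-- A (2,0,0)-coloring of the cycle `l`, viewed as a subgraph. -/
def IsCol200Cycle (l : List V) (c : V → Fin 3) : Prop :=
  (∀ u v : V, CycAdj l u v → c u ≠ 0 → c u ≠ c v) ∧
  (∀ v ∈ l, c v = 0 → {u | CycAdj l u v ∧ c u = 0}.ncard ≤ 2)

/-- `c` agrees with `c₀` on the cycle `l` and every vertex off `l` receives a
color different from those of all of its neighbors on `l`. -/
def SuperextendsOn (G : SimpleGraph V) (l : List V) (c₀ c : V → Fin 3) : Prop :=
  (∀ v ∈ l, c v = c₀ v) ∧ ∀ v : V, v ∉ l → ∀ u ∈ l, G.Adj v u → c v ≠ c u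

/-- `(G, l)` is superextendable: every (2,0,0)-coloring of the cycle `l` extends to
a (2,0,0)-coloring of `G` in which every vertex off `l` gets a color different from
those of all of its neighbors on `l`. -/
def Superextendable (G : SimpleGraph V) (l : List V) : Prop :=
  ∀ c₀ : V → Fin 3, IsCol200Cycle l c₀ →
    ∃ c : V → Fin 3, IsCol200 G c ∧ SuperextendsOn G l c₀ c

/-- `σ(G) = |V(G)| + |E(G)|`. -/
noncomputable def PlaneGraph.sigma (P : PlaneGraph V) : ℕ :=
  Fintype.card V + P.G.edgeSet.ncard

/-- `(P, C₀)` is a counterexample to the main theorem that minimizes `σ`: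
`P` is a plane graph in `𝒢`, `C₀` is a triangle or a 7-cycle of `P`,
`(P, C₀)` is not superextendable, and every pair `(P', C')` of this kind with
smaller `σ` is superextendable. -/
def IsMinCex (P : PlaneGraph V) (C₀ : List V) : Prop :=
  P.InFamilyG ∧ IsCycleList P.G C₀ ∧ (C₀.length = 3 ∨ C₀.length = 7) ∧
  ¬ Superextendable P.G C₀ ∧
  ∀ (n : ℕ) (P' : PlaneGraph (Fin n)) (C' : List (Fin n)),
    P'.InFamilyG → IsCycleList P'.G C' → (C'.length = 3 ∨ C'.length = 7) →
    P'.sigma < P.sigma → Superextendable P'.G C'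

/-- The graph obtained from `G` by identifying the vertices `u` and `w` (the merged
vertex is `u`; the vertex `w` becomes isolated). -/
def identify (G : SimpleGraph V) (u w : V) : SimpleGraph V where
  Adj x y := x ≠ y ∧ x ≠ w ∧ y ≠ w ∧
    (G.Adj x y ∨ (x = u ∧ G.Adj w y) ∨ (y = u ∧ G.Adj x w))
  symm := ⟨by
    rintro x y ⟨hxy, hxw, hyw, h⟩
    refine ⟨hxy.symm, hyw, hxw, ?_⟩
    rcases h with h | ⟨hx, h⟩ | ⟨hy, h⟩
    · exact Or.inl h.symm
    · exact Or.inr (Or.inr ⟨hx, h.symm⟩)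
    · exact Or.inr (Or.inl ⟨hy, h.symm⟩)⟩
  loopless := ⟨by
    rintro x ⟨hxx, -⟩
    exact hxx rfl⟩

/-- The graph obtained from `G` by deleting the vertices of `S`
(the deleted vertices become isolated). -/
def delVerts (G : SimpleGraph V) (S : Set V) : SimpleGraph V where
  Adj x y := G.Adj x y ∧ x ∉ S ∧ y ∉ S
  symm := ⟨fun _ _ h => ⟨h.1.symm, h.2.2, h.2.1⟩⟩
  loopless := ⟨fun x h => G.loopless.irrefl x h.1⟩

/-- Base special 3-faces: `(3,3,5⁻)`-faces and `(3,4,4)`-faces disjoint from `C₀`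
(the first listed vertex is a 3-vertex). -/
def IsBaseSpecial (P : PlaneGraph V) (C₀ : List V) (u v w : V) : Prop :=
  P.IsFace [u, v, w] ∧ u ∉ C₀ ∧ v ∉ C₀ ∧ w ∉ C₀ ∧ P.deg u = 3 ∧
    ((P.deg v = 3 ∧ P.deg w ≤ 5) ∨ (P.deg v = 4 ∧ P.deg w = 4))

/-- Special 3-faces of rank at most `n`, following the paper's recursive
definition: the base special faces are the `(3,3,5⁻)`- and `(3,4,4)`-faces
disjoint from `C₀`; a `(3,5,5)`-face `uvw` (disjoint from `C₀`, with `d(u)=3`)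
is special of rank `n+1` when each off-face neighbor of each of its two
5-vertices is a 3-vertex lying on a pendant special 3-face of rank at most `n`,
i.e. the two 5-vertices have six pendant special 3-faces altogether. -/
def SpecialRank (P : PlaneGraph V) (C₀ : List V) : ℕ → V → V → V → Prop
  | 0 => fun u v w => IsBaseSpecial P C₀ u v w
  | n + 1 => fun u v w =>
      SpecialRank P C₀ n u v w ∨
      (P.IsFace [u, v, w] ∧ u ∉ C₀ ∧ v ∉ C₀ ∧ w ∉ C₀ ∧
        P.deg u = 3 ∧ P.deg v = 5 ∧ P.deg w = 5 ∧
        (∀ x : V, P.G.Adj v x → x ≠ u → x ≠ w →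
          ∃ a b c : V, SpecialRank P C₀ n a b c ∧ v ≠ a ∧ v ≠ b ∧ v ≠ c ∧
            (x = a ∨ x = b ∨ x = c) ∧ P.deg x = 3) ∧
        (∀ x : V, P.G.Adj w x → x ≠ u → x ≠ v →
          ∃ a b c : V, SpecialRank P C₀ n a b c ∧ w ≠ a ∧ w ≠ b ∧ w ≠ c ∧
            (x = a ∨ x = b ∨ x = c) ∧ P.deg x = 3))

/-- `uvw` is a special 3-face (of some rank). -/
def IsSpecial (P : PlaneGraph V) (C₀ : List V) (u v w : V) : Prop :=
  ∃ n : ℕ, SpecialRank P C₀ n u v w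

/-- The set `S` is the vertex set of a special 3-face. -/
def IsSpecialOn (P : PlaneGraph V) (C₀ : List V) (S : Set V) : Prop :=
  ∃ a b c : V, IsSpecial P C₀ a b c ∧ S = {a, b, c}

/-- `S` is the vertex set of a pendant special 3-face of `y`:  a special 3-face
not containing `y` one of whose 3-vertices is adjacent to `y`. -/
def PendantSpecial (P : PlaneGraph V) (C₀ : List V) (y : V) (S : Set V) : Prop :=
  IsSpecialOn P C₀ S ∧ y ∉ S ∧ ∃ x ∈ S, P.deg x = 3 ∧ P.G.Adj y x

/-- The number of pendant special 3-faces of `y`. -/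
noncomputable def pendCount (P : PlaneGraph V) (C₀ : List V) (y : V) : ℕ :=
  {S : Set V | PendantSpecial P C₀ y S}.ncard

namespace List

variable {α : Type*}

theorem zip_rotate_one_rotate (l : List α) (n : ℕ) :
    (l.rotate n).zip ((l.rotate n).rotate 1) = (l.zip (l.rotate 1)).rotate n := by
  rw [zip_eq_zipWith, zip_eq_zipWith, zipWith_rotate_distrib _ _ _ _ (length_rotate l 1).symm,
    rotate_rotate, rotate_rotate, Nat.add_comm]

theorem reverse_zip_rotate_one_reverse_rotate_one (l : List α) :
    ((l.reverse.zip (l.reverse.rotate 1)).reverse).rotate 1 = (l.rotate 1).zip l := by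
  rcases eq_or_ne l [] with rfl | hl
  · rfl
  have hL : 0 < l.length := length_pos_iff.2 hl
  have hback : l.rotate (l.length - 1 % l.length + 1) = l := by
    rw [← rotate_mod]
    rcases Nat.lt_or_ge 1 l.length with h | h
    · rw [Nat.mod_eq_of_lt h, Nat.sub_add_cancel h.le, Nat.mod_self, rotate_zero]
    · rw [show l.length = 1 by omega, Nat.mod_self, rotate_zero]
  rw [zip_eq_zipWith, reverse_zipWith (by simp), reverse_reverse, rotate_reverse,
    reverse_reverse, zipWith_rotate_distrib _ _ _ _ (by simp), rotate_rotate, hback,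
    zip_eq_zipWith]

theorem mem_reverse_zip_reverse_rotate_one {l : List α} {p : α × α} :
    p ∈ l.reverse.zip (l.reverse.rotate 1) ↔ p.swap ∈ l.zip (l.rotate 1) := by
  rw [← mem_reverse, ← mem_rotate (n := 1), reverse_zip_rotate_one_reverse_rotate_one,
    ← zip_swap, mem_map]
  exact ⟨fun ⟨q, hq, hqp⟩ => hqp ▸ by simpa using hq, fun h => ⟨p.swap, h, p.swap_swap⟩⟩

theorem exists_rotate_eq_cons_cons_of_mem_zip_rotate_one {l : List α} (hl : 2 ≤ l.length)
    {u v : α} (huv : (u, v) ∈ l.zip (l.rotate 1)) : ∃ n r, l.rotate n = u :: v :: r := by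
  obtain ⟨i, hi, hiuv⟩ := mem_iff_getElem.1 huv
  refine ⟨i, ?_⟩
  have hhead : ((l.rotate i).zip ((l.rotate i).rotate 1)).head? = some (u, v) := by
    rw [zip_rotate_one_rotate, head?_rotate hi, getElem?_eq_getElem hi, hiuv]
  match hm : l.rotate i, hhead with
  | a :: b :: r, hhead =>
    rw [zip_eq_zipWith, zipWith_rotate_one] at hhead
    obtain ⟨rfl, rfl⟩ := Prod.mk.inj (Option.some.inj hhead)
    exact ⟨r, rfl⟩
  | [], _ => simp [← length_rotate l i, hm] at hl
  | [_], _ => simp [← length_rotate l i, hm] at hl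

end List

namespace IsCycleList

variable {α : Type} {G : SimpleGraph α} {l : List α}

theorem rotate (h : IsCycleList G l) (n : ℕ) : IsCycleList G (l.rotate n) := by
  obtain ⟨hlen, hnd, hadj⟩ := h
  refine ⟨by simpa using hlen, List.nodup_rotate.2 hnd, fun p hp => ?_⟩
  rw [List.zip_rotate_one_rotate, List.mem_rotate] at hp
  exact hadj p hp

theorem reverse (h : IsCycleList G l) : IsCycleList G l.reverse := by
  obtain ⟨hlen, hnd, hadj⟩ := h
  refine ⟨by simpa using hlen, List.nodup_reverse.2 hnd, fun p hp => ?_⟩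
  exact (hadj p.swap (List.mem_reverse_zip_reverse_rotate_one.1 hp)).symm

theorem exists_cons_cons_of_cycAdj (h : IsCycleList G l) {u v : α} (huv : CycAdj l u v) :
    ∃ r : List α, r.length + 2 = l.length ∧ IsCycleList G (u :: v :: r) := by
  have hlen : 2 ≤ l.length := by have := h.1; omega
  rcases huv with huv | hvu
  · obtain ⟨n, r, hr⟩ := List.exists_rotate_eq_cons_cons_of_mem_zip_rotate_one hlen huv
    refine ⟨r, by simpa [hr] using l.length_rotate n, hr ▸ h.rotate n⟩
  · obtain ⟨n, r, hr⟩ := List.exists_rotate_eq_cons_cons_of_mem_zip_rotate_one hlen hvu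
    have hrev : (v :: u :: r).reverse.rotate r.length = u :: v :: r.reverse := by
      simpa using List.rotate_append_length_eq r.reverse [u, v]
    refine ⟨r.reverse, by simpa [hr] using l.length_rotate n, ?_⟩
    exact hrev ▸ (hr ▸ h.rotate n).reverse.rotate r.length

theorem isTriangle {u v w : α} (h : IsCycleList G [u, v, w]) : IsTriangle G u v w := by
  obtain ⟨-, -, hadj⟩ := h
  exact ⟨hadj (u, v) (by simp [List.rotate]), hadj (v, w) (by simp [List.rotate]),
    hadj (w, u) (by simp [List.rotate])⟩

end IsCycleList

theorem PlaneGraph.IsFace.isCycleList {P : PlaneGraph V} {l : List V} (h : P.IsFace l) :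
    IsCycleList P.G l := by
  obtain ⟨l', hl', n, rfl | rfl⟩ := h
  · exact IsCycleList.rotate (P.faces_cycle l' hl') n
  · exact (IsCycleList.reverse (P.faces_cycle l' hl')).rotate n

theorem NoIntersectingTriangles.mem_of_isTriangle {α : Type} {G : SimpleGraph α}
    (hT : NoIntersectingTriangles G) {a b c d e : α} (habc : IsTriangle G a b c)
    (hade : IsTriangle G a d e) : d ∈ ({a, b, c} : Set α) := by
  rw [hT a b c a d e habc hade ⟨a, by simp⟩]
  simp

-- The apex `w` of the triangle closes the 5-cycle `w u y x v`; it avoids `x` and `y`, since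
-- otherwise the triangle would meet the triangle `u y w` or `v x w` in a vertex.
theorem not_isTriangle_of_isCycleList_four {α : Type} {G : SimpleGraph α}
    (h5 : NoFiveCycle G) (hT : NoIntersectingTriangles G) {u v x y : α}
    (hq : IsCycleList G [u, v, x, y]) (w : α) : ¬ IsTriangle G u v w := by
  intro ht
  obtain ⟨-, hnd, hadj⟩ := hq
  have hvx : G.Adj v x := hadj (v, x) (by simp [List.rotate])
  have hxy : G.Adj x y := hadj (x, y) (by simp [List.rotate])
  have hyu : G.Adj y u := hadj (y, u) (by simp [List.rotate])
  simp only [List.nodup_cons, List.mem_cons, List.not_mem_nil, or_false, not_or,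
    List.nodup_nil, not_false_eq_true, and_true] at hnd
  have hwx : w ≠ x := by
    rintro rfl
    have hy := hT.mem_of_isTriangle ht ⟨hyu.symm, hxy.symm, ht.2.2⟩
    simp only [Set.mem_insert_iff, Set.mem_singleton_iff] at hy
    tauto
  have hwy : w ≠ y := by
    rintro rfl
    have hx := hT.mem_of_isTriangle ⟨ht.2.1, ht.2.2, ht.1⟩ ⟨hvx, hxy, ht.2.1.symm⟩
    simp only [Set.mem_insert_iff, Set.mem_singleton_iff] at hx
    tauto
  refine h5 [w, u, y, x, v] ⟨by simp, ?_, ?_⟩ rfl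
  · simp only [List.nodup_cons, List.mem_cons, List.not_mem_nil, or_false, not_or]
    have hvw := ht.2.1.ne
    have hwu := ht.2.2.ne
    tauto
  · rw [show [w, u, y, x, v].rotate 1 = [u, y, x, v, w] from rfl]
    simp only [List.zip_cons_cons, List.zip_nil_right, List.mem_cons, List.not_mem_nil,
      or_false, forall_eq_or_imp, forall_eq]
    exact ⟨ht.2.2, hyu.symm, hxy.symm, hvx.symm, ht.2.1⟩

/-- In the minimal counterexample `(G, C₀)`, no 3-face and 4-face of
`G` share a common edge. -/
theorem mincex_no_three_face_meets_four_face
    (P : PlaneGraph V) (C₀ : List V) (h : IsMinCex P C₀) :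
    ∀ l₃ l₄ : List V, P.IsFace l₃ → l₃.length = 3 → P.IsFace l₄ → l₄.length = 4 →
      ∀ u v : V, CycAdj l₃ u v → ¬ CycAdj l₄ u v := by
  intro l₃ l₄ hf₃ hlen₃ hf₄ hlen₄ u v h₃ h₄
  obtain ⟨⟨h5, hT⟩, -⟩ := h
  obtain ⟨r₃, hr₃, ht⟩ := hf₃.isCycleList.exists_cons_cons_of_cycAdj h₃
  obtain ⟨r₄, hr₄, hq⟩ := hf₄.isCycleList.exists_cons_cons_of_cycAdj h₄
  obtain ⟨w, rfl⟩ := List.length_eq_one_iff.1 (by omega : r₃.length = 1)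
  obtain ⟨x, y, rfl⟩ := List.length_eq_two.1 (by omega : r₄.length = 2)
  exact not_isTriangle_of_isCycleList_four h5 hT hq w ht.isTriangle
end

section
/- In the minimal counterexample (G, C_0), every 3-vertex of G lying inside C_0 either has a neighbor on C_0 or has a neighbor of degree at least 5. -/
/-!
Common definitions for formalizing "A relaxation of the Bordeaux Conjecture"
(Liu, Li, Yu).  We model a plane graph combinatorially: a simple graph together
with a set of faces (each given by its boundary cycle, a list of vertices in
cyclic order), a distinguished outer face, and, for each cycle, the sets of
vertices drawn strictly inside and strictly outside of it.

A (2,0,0)-coloring uses colors `0, 1, 2 : Fin 3`, where color `0` is the color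
of deficiency 2 (called "color 1" in the paper) and colors `1` and `2` must
induce independent sets.
-/

variable {V : Type} [Fintype V] [DecidableEq V]

/-!
Suppose the 3-vertex `v` inside `C₀` had no neighbour on `C₀` and only neighbours of degree at
most 4. By minimality `G - v` is superextendable, and every superextension of a colouring of `C₀`
to `G - v` extends to `v`. If a nonzero colour is missing on the neighbourhood of `v`, then `v`
takes it. Otherwise colours 1 and 2 both occur there, so at most one neighbour `u` has colour 0,
and `v` takes colour 0; this is only blocked when `u` already has two neighbours of colour 0 in
`G - v`, and then `u`, having at most one further neighbour there, is first recoloured with a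
free nonzero colour.
-/

open SimpleGraph

section Transport

variable {U W : Type} {G : SimpleGraph U} {G' : SimpleGraph W}

lemma zip_rotate_map (f : U → W) (l : List U) :
    (l.map f).zip ((l.map f).rotate 1) = (l.zip (l.rotate 1)).map (Prod.map f f) := by
  rw [← List.map_rotate, List.zip_map]

lemma cycAdj_map {f : U → W} (hf : f.Injective) {l : List U} {x y : U} :
    CycAdj (l.map f) (f x) (f y) ↔ CycAdj l x y := by
  have hinj : (Prod.map f f).Injective := hf.prodMap hf
  simp only [CycAdj, zip_rotate_map, ← Prod.map_apply f f, List.mem_map_of_injective hinj]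

lemma IsCycleList.map {l : List U} (f : Copy G G') (hl : IsCycleList G l) :
    IsCycleList G' (l.map f) := by
  refine ⟨by simpa using hl.1, hl.2.1.map f.injective, fun p hp => ?_⟩
  rw [zip_rotate_map, List.mem_map] at hp
  obtain ⟨q, hq, rfl⟩ := hp
  exact f.toHom.map_adj (hl.2.2 q hq)

lemma IsTriangle.map {a b c : U} (f : Copy G G') (h : IsTriangle G a b c) :
    IsTriangle G' (f a) (f b) (f c) :=
  ⟨f.toHom.map_adj h.1, f.toHom.map_adj h.2.1, f.toHom.map_adj h.2.2⟩

lemma NoFiveCycle.of_copy (f : Copy G G') (h : NoFiveCycle G') : NoFiveCycle G :=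
  fun l hl => by simpa using h _ (hl.map f)

lemma NoIntersectingTriangles.of_copy (f : Copy G G') (h : NoIntersectingTriangles G') :
    NoIntersectingTriangles G := by
  intro a b c d e g habc hdeg ⟨x, hx⟩
  have himage := h _ _ _ _ _ _ (habc.map f) (hdeg.map f) ⟨f x, by
    simp only [Set.mem_inter_iff, Set.mem_insert_iff, Set.mem_singleton_iff] at hx ⊢
    rcases hx with ⟨rfl | rfl | rfl, rfl | rfl | rfl⟩ <;> simp_all⟩
  apply Set.image_injective.2 f.injective
  simpa only [Set.image_insert_eq, Set.image_singleton, Copy.coe_toHom] using himage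

lemma IsCol200Cycle.map_equiv {l : List U} {c : U → Fin 3} (e : U ≃ W)
    (h : IsCol200Cycle l c) : IsCol200Cycle (l.map e) (c ∘ e.symm) := by
  have hadj : ∀ x y, CycAdj (l.map e) x y ↔ CycAdj l (e.symm x) (e.symm y) := fun x y => by
    rw [← cycAdj_map e.injective, e.apply_symm_apply, e.apply_symm_apply]
  refine ⟨fun x y hxy hx => h.1 _ _ ((hadj x y).1 hxy) hx, fun x hx hx0 => ?_⟩
  have hset : {u | CycAdj (l.map e) u x ∧ (c ∘ e.symm) u = 0} =
      e.symm ⁻¹' {u | CycAdj l u (e.symm x) ∧ c u = 0} := by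
    ext u
    simp [hadj]
  rw [hset, Set.ncard_preimage_of_injective_subset_range e.symm.injective (by simp)]
  rw [← e.apply_symm_apply x, List.mem_map_of_injective e.injective] at hx
  exact h.2 _ hx hx0

lemma IsCol200.comp_iso {c : W → Fin 3} (f : G ≃g G') (h : IsCol200 G' c) :
    IsCol200 G (c ∘ f) := by
  refine ⟨fun x y hxy hx => h.1 _ _ (f.map_adj_iff.2 hxy) hx, fun x hx0 => ?_⟩
  have hset : {u | G.Adj x u ∧ (c ∘ f) u = 0} = f ⁻¹' {u | G'.Adj (f x) u ∧ c u = 0} := by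
    ext u
    simp [f.map_adj_iff]
  rw [hset, Set.ncard_preimage_of_injective_subset_range f.injective (by simp)]
  exact h.2 _ hx0

lemma Superextendable.of_iso {l : List U} (f : G ≃g G') (h : Superextendable G' (l.map f)) :
    Superextendable G l := by
  intro c₀ hc₀
  obtain ⟨c, hc, hagree, hoff⟩ := h (c₀ ∘ f.symm) (hc₀.map_equiv f.toEquiv)
  refine ⟨c ∘ f, hc.comp_iso f, fun x hx => ?_, fun x hx u hu hxu => ?_⟩
  · simpa using hagree (f x) (List.mem_map_of_mem hx)
  · exact hoff (f x) (by rwa [List.mem_map_of_injective f.injective])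
      (f u) (List.mem_map_of_mem hu) (f.map_adj_iff.2 hxu)

lemma SimpleGraph.Iso.ncard_edgeSet_eq (f : G ≃g G') : G.edgeSet.ncard = G'.edgeSet.ncard := by
  rw [← Nat.card_coe_set_eq, ← Nat.card_coe_set_eq]
  exact Nat.card_congr f.mapEdgeSet

end Transport

section Recoloring

variable {U : Type} {G H : SimpleGraph U} {C₀ : List U} {c₀ c : U → Fin 3} {u : U}

lemma delVerts_le (G : SimpleGraph U) (S : Set U) : delVerts G S ≤ G :=
  fun _ _ h => h.1

lemma delVerts_lt {S : Set U} {v w : U} (hv : v ∈ S) (hvw : G.Adj v w) : delVerts G S < G :=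
  lt_of_le_not_ge (delVerts_le G S) fun hle => (hle hvw).2.1 hv

lemma IsCycleList.delVerts {l : List U} {S : Set U} (hl : IsCycleList G l)
    (hS : ∀ x ∈ l, x ∉ S) : IsCycleList (delVerts G S) l := by
  refine ⟨hl.1, hl.2.1, fun p hp => ⟨hl.2.2 p hp, hS _ (List.of_mem_zip hp).1, hS _ ?_⟩⟩
  exact List.mem_rotate.1 (List.of_mem_zip hp).2

lemma IsCol200.update_of_ne_zero [Finite U] [DecidableEq U] {α : Fin 3}
    (hGH : delVerts G {u} ≤ H) (hc : IsCol200 H c) (hα : α ≠ 0)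
    (hαN : ∀ w, G.Adj u w → c w ≠ α) : IsCol200 G (Function.update c u α) := by
  have hH : ∀ {x y}, G.Adj x y → x ≠ u → y ≠ u → H.Adj x y := fun hxy hx hy => hGH ⟨hxy, hx, hy⟩
  refine ⟨fun x y hxy hx0 => ?_, fun x hx0 => ?_⟩
  · rcases eq_or_ne x u with rfl | hxu
    · simpa [hxy.ne'] using (hαN y hxy).symm
    rcases eq_or_ne y u with rfl | hyu
    · simpa [hxu] using hαN x hxy.symm
    simpa [hxu, hyu] using hc.1 x y (hH hxy hxu hyu) (by simpa [hxu] using hx0)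
  · have hxu : x ≠ u := by rintro rfl; exact hα (by simpa using hx0)
    refine le_trans (Set.ncard_le_ncard fun y ⟨hxy, hy0⟩ => ?_)
      (hc.2 x (by simpa [hxu] using hx0))
    have hyu : y ≠ u := by rintro rfl; exact hα (by simpa using hy0)
    exact ⟨hH hxy hxu hyu, by simpa [hyu] using hy0⟩

lemma IsCol200.update_zero [Finite U] [DecidableEq U] (hGH : delVerts G {u} ≤ H)
    (hc : IsCol200 H c)
    (hZ : {w | G.Adj u w ∧ c w = 0}.ncard ≤ 2)
    (hZ1 : ∀ w, G.Adj u w → c w = 0 → {x | H.Adj w x ∧ c x = 0}.ncard ≤ 1) :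
    IsCol200 G (Function.update c u 0) := by
  have hH : ∀ {x y}, G.Adj x y → x ≠ u → y ≠ u → H.Adj x y := fun hxy hx hy => hGH ⟨hxy, hx, hy⟩
  refine ⟨fun x y hxy hx0 => ?_, fun x hx0 => ?_⟩
  · have hxu : x ≠ u := by rintro rfl; simp at hx0
    rcases eq_or_ne y u with rfl | hyu
    · simpa [hxu] using hx0
    simpa [hxu, hyu] using hc.1 x y (hH hxy hxu hyu) (by simpa [hxu] using hx0)
  rcases eq_or_ne x u with rfl | hxu
  · convert hZ using 2
    exact Set.ext fun y => and_congr_right fun hxy => by simp [hxy.ne']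
  have hx0' : c x = 0 := by simpa [hxu] using hx0
  have hsub : {y | G.Adj x y ∧ Function.update c u 0 y = 0} ⊆
      insert u {y | H.Adj x y ∧ c y = 0} := by
    rintro y ⟨hxy, hy0⟩
    rcases eq_or_ne y u with rfl | hyu
    · exact Set.mem_insert _ _
    · exact Or.inr ⟨hH hxy hxu hyu, by simpa [hyu] using hy0⟩
  by_cases hux : G.Adj u x
  · calc _ ≤ _ := Set.ncard_le_ncard hsub
      _ ≤ {y | H.Adj x y ∧ c y = 0}.ncard + 1 := Set.ncard_insert_le _ _
      _ ≤ 2 := by have := hZ1 x hux hx0'; omega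
  · refine le_trans (Set.ncard_le_ncard fun y hy => ?_) (hc.2 x hx0')
    rcases hsub hy with rfl | hy'
    · exact absurd hy.1.symm hux
    · exact hy'

lemma SuperextendsOn.update [DecidableEq U] {β : Fin 3} (hGH : delVerts G {u} ≤ H)
    (huC : u ∉ C₀) (hs : SuperextendsOn H C₀ c₀ c) (hβ : ∀ w ∈ C₀, G.Adj u w → β ≠ c w) :
    SuperextendsOn G C₀ c₀ (Function.update c u β) := by
  have hne : ∀ w ∈ C₀, w ≠ u := fun w hw h => huC (h ▸ hw)
  refine ⟨fun x hx => by simpa [hne x hx] using hs.1 x hx, fun x hx w hw hxw => ?_⟩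
  rcases eq_or_ne x u with rfl | hxu
  · simpa [hne w hw] using hβ w hw hxw
  · simpa [hne w hw, hxu] using hs.2 x hx w hw (hGH ⟨hxw, hxu, hne w hw⟩)

end Recoloring

section Counting

variable {U : Type} [Finite U] {c : U → Fin 3} {N : Set U}

lemma ncard_sep_eq_zero_le_one {a b : U} (hN : N.ncard ≤ 3) (ha : a ∈ N) (hb : b ∈ N)
    (hca : c a = 1) (hcb : c b = 2) : {w ∈ N | c w = 0}.ncard ≤ 1 := by
  have hsub : insert a (insert b {w ∈ N | c w = 0}) ⊆ N := by
    rintro w (rfl | rfl | ⟨hw, -⟩) <;> assumption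
  have hb' : b ∉ {w ∈ N | c w = 0} := fun hb0 => by simp [hcb] at hb0
  have ha' : a ∉ insert b {w ∈ N | c w = 0} := by
    rintro (rfl | ⟨-, ha0⟩)
    · simp [hca] at hcb
    · simp [hca] at ha0
  have := Set.ncard_le_ncard hsub
  rw [Set.ncard_insert_of_notMem ha', Set.ncard_insert_of_notMem hb'] at this
  omega

lemma exists_ne_zero_forall_ne (hN : N.ncard ≤ 3) (hZ : 2 ≤ {w ∈ N | c w = 0}.ncard) :
    ∃ α : Fin 3, α ≠ 0 ∧ ∀ w ∈ N, c w ≠ α := by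
  by_contra! hall
  obtain ⟨a, ha, hca⟩ := hall 1 (by decide)
  obtain ⟨b, hb, hcb⟩ := hall 2 (by decide)
  have := ncard_sep_eq_zero_le_one hN ha hb hca hcb
  omega

lemma exists_update_ne_zero [DecidableEq U] {H : SimpleGraph U} {C₀ : List U}
    {c₀ : U → Fin 3} {u : U} (hc : IsCol200 H c) (hs : SuperextendsOn H C₀ c₀ c) (huC : u ∉ C₀)
    (hN : (H.neighborSet u).ncard ≤ 3) (hZ : 2 ≤ {w | H.Adj u w ∧ c w = 0}.ncard) :
    ∃ α : Fin 3, α ≠ 0 ∧ IsCol200 H (Function.update c u α) ∧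
      SuperextendsOn H C₀ c₀ (Function.update c u α) := by
  obtain ⟨α, hα, hαN⟩ := exists_ne_zero_forall_ne hN hZ
  exact ⟨α, hα, hc.update_of_ne_zero (delVerts_le H {u}) hα hαN,
    hs.update (delVerts_le H {u}) huC fun w _ huw => (hαN w huw).symm⟩

end Counting

lemma neighborSet_delVerts_singleton {U : Type} {G : SimpleGraph U} {u v : U} (huv : u ≠ v) :
    (delVerts G {v}).neighborSet u = G.neighborSet u \ {v} :=
  Set.ext fun _ => ⟨fun h => ⟨h.1, h.2.2⟩, fun h => ⟨h.1, huv, h.2⟩⟩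

theorem Superextendable.of_delVerts {U : Type} [Finite U] [DecidableEq U] {G : SimpleGraph U}
    {C₀ : List U} {v : U} (hvC : v ∉ C₀) (hnb : ∀ w ∈ C₀, ¬ G.Adj v w)
    (hdeg : (G.neighborSet v).ncard ≤ 3) (hdeg4 : ∀ w, G.Adj v w → (G.neighborSet w).ncard ≤ 4)
    (h : Superextendable (delVerts G {v}) C₀) : Superextendable G C₀ := by
  intro c₀ hc₀
  obtain ⟨c, hc, hs⟩ := h c₀ hc₀
  set H := delVerts G {v}
  have extend_zero : ∀ c, IsCol200 H c → SuperextendsOn H C₀ c₀ c →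
      {w | G.Adj v w ∧ c w = 0}.ncard ≤ 1 →
      (∀ w, G.Adj v w → c w = 0 → {x | H.Adj w x ∧ c x = 0}.ncard ≤ 1) →
      ∃ c', IsCol200 G c' ∧ SuperextendsOn G C₀ c₀ c' := fun c hc hs hZ hZ1 =>
    ⟨_, hc.update_zero le_rfl (by omega) hZ1,
      hs.update le_rfl hvC fun w hw hvw => absurd hvw (hnb w hw)⟩
  by_cases hmissing : ∃ α : Fin 3, α ≠ 0 ∧ ∀ w, G.Adj v w → c w ≠ α
  · obtain ⟨α, hα, hαN⟩ := hmissing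
    exact ⟨_, hc.update_of_ne_zero le_rfl hα hαN,
      hs.update le_rfl hvC fun w _ hvw => (hαN w hvw).symm⟩
  push Not at hmissing
  obtain ⟨a, hva, hca⟩ := hmissing 1 (by decide)
  obtain ⟨b, hvb, hcb⟩ := hmissing 2 (by decide)
  have hZ : {w | G.Adj v w ∧ c w = 0}.ncard ≤ 1 := ncard_sep_eq_zero_le_one hdeg hva hvb hca hcb
  by_cases hlow : ∀ w, G.Adj v w → c w = 0 → {x | H.Adj w x ∧ c x = 0}.ncard ≤ 1
  · exact extend_zero c hc hs hZ hlow
  push Not at hlow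
  obtain ⟨u, hvu, hcu, hu2⟩ := hlow
  have hNu : (H.neighborSet u).ncard + 1 = (G.neighborSet u).ncard := by
    rw [neighborSet_delVerts_singleton hvu.ne']
    exact Set.ncard_sdiff_singleton_add_one hvu.symm
  obtain ⟨α, hα, hc₁, hs₁⟩ := exists_update_ne_zero hc hs (fun huC => hnb u huC hvu)
    (by have := hdeg4 u hvu; omega) hu2
  have hZ₁ : ∀ w, G.Adj v w → Function.update c u α w ≠ 0 := by
    intro w hvw hw0
    rcases eq_or_ne w u with rfl | hwu
    · exact hα (by simpa using hw0)
    · rw [Function.update_of_ne hwu] at hw0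
      exact hwu (((Set.ncard_le_one).1 hZ) w ⟨hvw, hw0⟩ u ⟨hvu, hcu⟩)
  have hempty : {w | G.Adj v w ∧ Function.update c u α w = 0} = ∅ :=
    Set.eq_empty_of_forall_notMem fun w hw => hZ₁ w hw.1 hw.2
  exact extend_zero _ hc₁ hs₁ (by simp [hempty]) fun w hvw hw0 => absurd hw0 (hZ₁ w hvw)

/-- Minimality in `IsMinCex` ranges over all `PlaneGraph` structures, so this trivial one (the
cycle is the only face, every other vertex lies inside it) serves for any subgraph. -/
def PlaneGraph.ofOuterCycle {W : Type} [Fintype W] [DecidableEq W] (G : SimpleGraph W)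
    (C : List W) (hC : IsCycleList G C) : PlaneGraph W where
  G := G
  faces := {C}
  outer := C
  outer_mem := rfl
  faces_cycle := fun l hl => by rw [Set.mem_singleton_iff.1 hl]; exact hC
  inside l := {x | x ∉ l}
  outside _ := ∅
  inside_outside_cover l _ x := by by_cases hx : x ∈ l <;> simp [hx]
  inside_outside_disjoint _ := Set.disjoint_empty _
  on_cycle_not_inside_outside _ _ hx := ⟨fun h => h hx, Set.notMem_empty _⟩
  no_edge_inside_outside _ _ _ _ _ hw := absurd hw (Set.notMem_empty _)
  inner_face_inside_empty l hl hne :=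
    absurd ⟨0, Or.inl (by rw [Set.mem_singleton_iff.1 hl, List.rotate_zero])⟩ hne
  outer_outside_empty := rfl

theorem IsMinCex.superextendable_of_lt {P : PlaneGraph V} {C₀ : List V} (h : IsMinCex P C₀)
    {H : SimpleGraph V} (hH : H < P.G) (hC : IsCycleList H C₀) : Superextendable H C₀ := by
  obtain ⟨⟨hno5, hnoTri⟩, -, hlen, -, hmin⟩ := h
  let f := Iso.map (Fintype.equivFin V) H
  have hC' : IsCycleList _ (C₀.map f) := hC.map f.toCopy
  have hcopy : Copy _ P.G := (Copy.ofLE H P.G hH.le).comp f.symm.toCopy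
  refine Superextendable.of_iso f (hmin _ (PlaneGraph.ofOuterCycle _ _ hC') _
    ⟨hno5.of_copy hcopy, hnoTri.of_copy hcopy⟩ hC' (by simpa using hlen) ?_)
  have hedges : H.edgeSet.ncard < P.G.edgeSet.ncard :=
    Set.ncard_lt_ncard (SimpleGraph.edgeSet_ssubset_edgeSet.2 hH)
  simpa [PlaneGraph.sigma, PlaneGraph.ofOuterCycle, ← f.ncard_edgeSet_eq] using hedges

theorem mincex_three_vertex_inside_C0_general
    (P : PlaneGraph V) (C₀ : List V) (h : IsMinCex P C₀)
    (v : V) (hv : v ∈ P.inside C₀) (hdeg : P.deg v = 3) :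
    (∃ u ∈ C₀, P.G.Adj v u) ∨ (∃ u : V, P.G.Adj v u ∧ 5 ≤ P.deg u) := by
  by_contra! ⟨hnb, hsmall⟩
  have hC₀ : IsCycleList P.G C₀ := h.2.1
  have hvC : v ∉ C₀ := fun hmem => (P.on_cycle_not_inside_outside C₀ v hmem).1 hv
  replace hdeg : (P.G.neighborSet v).ncard = 3 := hdeg
  obtain ⟨w, hvw⟩ := Set.nonempty_of_ncard_ne_zero (hdeg ▸ three_ne_zero)
  have hH := h.superextendable_of_lt (delVerts_lt (Set.mem_singleton v) hvw)
    (hC₀.delVerts fun x hx hxv => hvC (hxv ▸ hx))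
  exact h.2.2.2.1 (hH.of_delVerts hvC hnb hdeg.le fun u hvu => Nat.le_of_lt_succ (hsmall u hvu))

/-- In the minimal counterexample `(G, C₀)` (with `C₀` bounding the
outer face), every 3-vertex of `G` lying inside `C₀` has a neighbor on `C₀` or a
neighbor of degree at least 5. -/
theorem mincex_three_vertex_inside_C0
    (P : PlaneGraph V) (C₀ : List V) (h : IsMinCex P C₀)
    (houter : SameCycle C₀ P.outer)
    (v : V) (hv : v ∈ P.inside C₀) (hdeg : P.deg v = 3) :
    (∃ u ∈ C₀, P.G.Adj v u) ∨ (∃ u : V, P.G.Adj v u ∧ 5 ≤ P.deg u) :=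
  mincex_three_vertex_inside_C0_general P C₀ h v hv hdeg
end
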